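/- arXiv:chao-dyn/9801016 — 5 statements merged into one kernel-verified Lean document; each statement's English description precedes it below -/
import Mathlib

section
/- Suppose ξ : ℝ → 𝔤 and a : ℝ → V* are C¹ curves with a'(t) = −a(t)∘ρ(ξ(t)), let μ(t) := D₁l(ξ(t), a(t)) ∈ 𝔤*, assume Ξ(μ(t), a(t)) = ξ(t) for all t, and assume μ is differentiable and satisfies the Euler–Poincaré equation μ'(t)(ζ) = −μ(t)([ξ(t), ζ]) − D₂l(ξ(t), a(t))(a(t)∘ρ(ζ)) for all ζ ∈ 𝔤. Then (μ, a) satisfies the Lie–Poisson equations for the Hamiltonian h: for all ζ ∈ 𝔤 and all t, μ'(t)(ζ) = −μ(t)([Ξ(μ(t), a(t)), ζ]) + D₂h(μ(t), a(t))(a(t)∘ρ(ζ)), and a'(t) = −a(t)∘ρ(Ξ(μ(t), a(t))). -/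
/-!
Along the curve, `Ξ(μ, a) = ξ`, so the two systems differ only in the advected term, and there
the envelope theorem gives `D₂h(μ, a) = −D₂l(Ξ(μ, a), a)`: the fibre derivative `D₁l(Ξ(μ, a), a) = μ`
cancels every contribution of the derivative of `Ξ` to the derivative of `h`.
-/

open ContinuousLinearMap

section Legendre

variable {𝕜 W A : Type*} [NontriviallyNormedField 𝕜]
  [NormedAddCommGroup W] [NormedSpace 𝕜 W] [NormedAddCommGroup A] [NormedSpace 𝕜 A]

theorem hasFDerivAt_legendre {l : W × A → 𝕜} {Ξ : (W →L[𝕜] 𝕜) × A → W}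
    {q : (W →L[𝕜] 𝕜) × A} (hl : DifferentiableAt 𝕜 l (Ξ q, q.2)) (hΞ : DifferentiableAt 𝕜 Ξ q)
    (hLeg : (fderiv 𝕜 l (Ξ q, q.2)).comp (inl 𝕜 W A) = q.1) :
    HasFDerivAt (fun p : (W →L[𝕜] 𝕜) × A => p.1 (Ξ p) - l (Ξ p, p.2))
      ((apply 𝕜 𝕜 (Ξ q)).comp (fst 𝕜 _ A) - ((fderiv 𝕜 l (Ξ q, q.2)).comp (inr 𝕜 W A)).comp
        (snd 𝕜 _ A)) q := by
  set Dl := fderiv 𝕜 l (Ξ q, q.2)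
  set DΞ := fderiv 𝕜 Ξ q
  have hpair : HasFDerivAt (fun p : (W →L[𝕜] 𝕜) × A => p.1 (Ξ p))
      (q.1.comp DΞ + (fst 𝕜 _ A).flip (Ξ q)) q :=
    (hasFDerivAt_fst (p := q)).clm_apply hΞ.hasFDerivAt
  have hlag : HasFDerivAt (fun p : (W →L[𝕜] 𝕜) × A => l (Ξ p, p.2))
      (Dl.comp (DΞ.prod (snd 𝕜 _ A))) q :=
    hl.hasFDerivAt.comp q (hΞ.hasFDerivAt.prodMk hasFDerivAt_snd)
  refine (hpair.sub hlag).congr_fderiv ?_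
  refine ext fun ⟨ν, b⟩ => ?_
  have hsplit : Dl (DΞ (ν, b), b) = q.1 (DΞ (ν, b)) + Dl (0, b) := by
    rw [← hLeg, comp_apply, inl_apply, ← map_add, Prod.mk_add_mk, add_zero, zero_add]
  simp only [sub_apply, add_apply, comp_apply, prod_apply, coe_fst', coe_snd', flip_apply,
    apply_apply, inr_apply, hsplit]
  ring

end Legendre

theorem stmt4_general {G V : Type*}
    [NormedAddCommGroup G] [NormedSpace ℝ G]
    [NormedAddCommGroup V] [NormedSpace ℝ V] [FiniteDimensional ℝ V]
    (bracket : G →ₗ[ℝ] G →ₗ[ℝ] G)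
    (ρ : G →ₗ[ℝ] V →ₗ[ℝ] V)
    (l : G × (V →L[ℝ] ℝ) → ℝ) (hl : ContDiff ℝ 1 l)
    (Ξ : (G →L[ℝ] ℝ) × (V →L[ℝ] ℝ) → G) (hΞ : Differentiable ℝ Ξ)
    (hLeg : ∀ (μ : G →L[ℝ] ℝ) (a : V →L[ℝ] ℝ),
      (fderiv ℝ l (Ξ (μ, a), a)).comp (ContinuousLinearMap.inl ℝ G (V →L[ℝ] ℝ)) = μ)
    (h : (G →L[ℝ] ℝ) × (V →L[ℝ] ℝ) → ℝ)
    (hh : ∀ μ a, h (μ, a) = μ (Ξ (μ, a)) - l (Ξ (μ, a), a))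
    (ξ : ℝ → G) (a : ℝ → V →L[ℝ] ℝ)
    (hadv : ∀ t, deriv a t = -(a t).comp (LinearMap.toContinuousLinearMap (ρ (ξ t))))
    (μ : ℝ → G →L[ℝ] ℝ)
    (hΞμ : ∀ t, Ξ (μ t, a t) = ξ t)
    (hEP : ∀ (t : ℝ) (ζ : G),
      deriv (fun τ => μ τ ζ) t
        = -μ t (bracket (ξ t) ζ)
          - fderiv ℝ l (ξ t, a t)
              (0, (a t).comp (LinearMap.toContinuousLinearMap (ρ ζ)))) :
    (∀ (t : ℝ) (ζ : G),
      deriv (fun τ => μ τ ζ) t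
        = -μ t (bracket (Ξ (μ t, a t)) ζ)
          + fderiv ℝ h (μ t, a t)
              (0, (a t).comp (LinearMap.toContinuousLinearMap (ρ ζ)))) ∧
    (∀ t : ℝ,
      deriv a t = -(a t).comp (LinearMap.toContinuousLinearMap (ρ (Ξ (μ t, a t))))) := by
  have h_eq : h = fun p => p.1 (Ξ p) - l (Ξ p, p.2) := funext fun p => hh p.1 p.2
  refine ⟨fun t ζ => ?_, fun t => by rw [hadv t, hΞμ t]⟩
  have hlegendre :=
    hasFDerivAt_legendre (hl.differentiable one_ne_zero _) (hΞ _) (hLeg (μ t) (a t))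
  rw [h_eq, hlegendre.fderiv, hEP t ζ, hΞμ t]
  simp only [sub_apply, comp_apply, coe_fst', apply_apply, zero_apply, coe_snd', inr_apply,
    zero_sub]
  ring

/-- solutions of the Euler–Poincaré equation with advected parameter
`a' = −a∘ρ(ξ)` are mapped by the Legendre transformation `μ = D₁l(ξ, a)`,
`h(μ,a) = μ(Ξ(μ,a)) − l(Ξ(μ,a),a)` to solutions of the semidirect-product
Lie–Poisson equations
`μ'(ζ) = −μ([Ξ(μ,a), ζ]) + D₂h(μ,a)(a∘ρ(ζ))`, `a' = −a∘ρ(Ξ(μ,a))`. -/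
theorem stmt4 {G V : Type*}
    [NormedAddCommGroup G] [NormedSpace ℝ G] [FiniteDimensional ℝ G]
    [NormedAddCommGroup V] [NormedSpace ℝ V] [FiniteDimensional ℝ V]
    (bracket : G →ₗ[ℝ] G →ₗ[ℝ] G)
    (hskew : ∀ x y, bracket x y = -bracket y x)
    (hjacobi : ∀ x y z,
      bracket x (bracket y z) = bracket (bracket x y) z + bracket y (bracket x z))
    (ρ : G →ₗ[ℝ] V →ₗ[ℝ] V)
    (hρ : ∀ x y, ρ (bracket x y) = ρ x ∘ₗ ρ y - ρ y ∘ₗ ρ x)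
    (l : G × (V →L[ℝ] ℝ) → ℝ) (hl : ContDiff ℝ 1 l)
    (Ξ : (G →L[ℝ] ℝ) × (V →L[ℝ] ℝ) → G) (hΞ : Differentiable ℝ Ξ)
    (hLeg : ∀ (μ : G →L[ℝ] ℝ) (a : V →L[ℝ] ℝ),
      (fderiv ℝ l (Ξ (μ, a), a)).comp (ContinuousLinearMap.inl ℝ G (V →L[ℝ] ℝ)) = μ)
    (h : (G →L[ℝ] ℝ) × (V →L[ℝ] ℝ) → ℝ)
    (hh : ∀ μ a, h (μ, a) = μ (Ξ (μ, a)) - l (Ξ (μ, a), a))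
    (ξ : ℝ → G) (a : ℝ → V →L[ℝ] ℝ)
    (hξ : ContDiff ℝ 1 ξ) (ha : ContDiff ℝ 1 a)
    (hadv : ∀ t, deriv a t = -(a t).comp (LinearMap.toContinuousLinearMap (ρ (ξ t))))
    (μ : ℝ → G →L[ℝ] ℝ)
    (hμdef : ∀ t, μ t
      = (fderiv ℝ l (ξ t, a t)).comp (ContinuousLinearMap.inl ℝ G (V →L[ℝ] ℝ)))
    (hΞμ : ∀ t, Ξ (μ t, a t) = ξ t)
    (hμdiff : Differentiable ℝ μ)
    (hEP : ∀ (t : ℝ) (ζ : G),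
      deriv (fun τ => μ τ ζ) t
        = -μ t (bracket (ξ t) ζ)
          - fderiv ℝ l (ξ t, a t)
              (0, (a t).comp (LinearMap.toContinuousLinearMap (ρ ζ)))) :
    (∀ (t : ℝ) (ζ : G),
      deriv (fun τ => μ τ ζ) t
        = -μ t (bracket (Ξ (μ t, a t)) ζ)
          + fderiv ℝ h (μ t, a t)
              (0, (a t).comp (LinearMap.toContinuousLinearMap (ρ ζ)))) ∧
    (∀ t : ℝ,
      deriv a t = -(a t).comp (LinearMap.toContinuousLinearMap (ρ (Ξ (μ t, a t))))) :=
  stmt4_general bracket ρ l hl Ξ hΞ hLeg h hh ξ a hadv μ hΞμ hEP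
end

section
/- For every fixed matrix η ∈ Matrix (n×n, ℝ), the Kelvin–Noether quantity t ↦ μ(t)(g(t) · η · g(t)⁻¹) is differentiable, and its derivative equals f(t)(g(t) · η · g(t)⁻¹); that is, along solutions of the forced Euler–Poincaré equation the coadjoint-transported momentum changes exactly by the transported forcing term. -/
/-!
Put `A τ = g τ * η * (g τ)⁻¹`. Differentiating `g * g⁻¹ = 1` gives `(g⁻¹)' = -g⁻¹ ξ`, hence
`A' = ξ A - A ξ`. By the product rule `(μ(A))' = μ(A') + μ'(A)`, and the forced Euler–Poincaré
equation turns `μ'(A)` into `-μ(ξ A - A ξ) + f(A)`, so everything but `f(A)` cancels.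
-/

open Ring

section NormedAlgebra

variable {𝕜 R : Type*} [NontriviallyNormedField 𝕜] [NormedRing R] [HasSummableGeomSeries R]
  [NormedAlgebra 𝕜 R] {g : 𝕜 → R} {g' : R} {t : 𝕜}

theorem HasDerivAt.ringInverse (hg : HasDerivAt g g' t) (hu : IsUnit (g t)) :
    HasDerivAt (fun τ => (g τ)⁻¹ʳ) (-((g t)⁻¹ʳ * g' * (g t)⁻¹ʳ)) t := by
  obtain ⟨u, hu⟩ := hu
  have hinv := hasFDerivAt_ringInverse (𝕜 := 𝕜) u
  rw [← Ring.inverse_unit, hu] at hinv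
  simpa [Function.comp_def] using hinv.comp_hasDerivAt t hg

theorem HasDerivAt.conj_ringInverse {ξ : R} (η : R) (hg : HasDerivAt g (ξ * g t) t)
    (hu : IsUnit (g t)) :
    HasDerivAt (fun τ => g τ * η * (g τ)⁻¹ʳ)
      (ξ * (g t * η * (g t)⁻¹ʳ) - g t * η * (g t)⁻¹ʳ * ξ) t := by
  convert (hg.mul_const η).fun_mul (hg.ringInverse hu) using 1
  have hcancel : (g t)⁻¹ʳ * (ξ * g t) * (g t)⁻¹ʳ = (g t)⁻¹ʳ * ξ := by
    rw [mul_assoc, mul_assoc, mul_inverse_cancel _ hu, mul_one]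
  rw [hcancel]
  noncomm_ring

end NormedAlgebra

/- Matrices carry no normed-ring instance, so we borrow the `ℓ∞`-operator norm: it induces the
product topology, and `HasDerivAt` only depends on the topology. -/
theorem Matrix.hasDerivAt_conj_nonsing_inv {𝕜 m : Type*} [NontriviallyNormedField 𝕜]
    [CompleteSpace 𝕜] [Fintype m] [DecidableEq m] {g : 𝕜 → Matrix m m 𝕜} {ξ : Matrix m m 𝕜}
    {t : 𝕜} (η : Matrix m m 𝕜) (hg : HasDerivAt g (ξ * g t) t) (hu : IsUnit (g t)) :
    HasDerivAt (fun τ => g τ * η * (g τ)⁻¹)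
      (ξ * (g t * η * (g t)⁻¹) - g t * η * (g t)⁻¹ * ξ) t := by
  let _ : NormedRing (Matrix m m 𝕜) := Matrix.linftyOpNormedRing
  let _ : NormedAlgebra 𝕜 (Matrix m m 𝕜) := Matrix.linftyOpNormedAlgebra
  have : @CompleteSpace (Matrix m m 𝕜) PseudoMetricSpace.toUniformSpace :=
    FiniteDimensional.complete 𝕜 _
  simp only [Matrix.nonsing_inv_eq_ringInverse]
  exact hg.conj_ringInverse η hu

theorem hasDerivAt_linearMap_apply {𝕜 E F : Type*} [NontriviallyNormedField 𝕜] [CompleteSpace 𝕜]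
    [NormedAddCommGroup E] [NormedSpace 𝕜 E] [FiniteDimensional 𝕜 E] [NormedAddCommGroup F]
    [NormedSpace 𝕜 F] {μ : 𝕜 → E →ₗ[𝕜] F} {dμ : E →ₗ[𝕜] F} {A : 𝕜 → E} {A' : E} {t : 𝕜}
    (hμ : ∀ v, HasDerivAt (fun τ => μ τ v) (dμ v) t) (hA : HasDerivAt A A' t) :
    HasDerivAt (fun τ => μ τ (A τ)) (μ t A' + dμ (A t)) t := by
  let b := Module.finBasis 𝕜 E
  have expand (ν : E →ₗ[𝕜] F) (v : E) : ν v = ∑ i, b.coord i v • ν (b i) := by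
    conv_lhs => rw [← b.sum_repr v]
    simp only [map_sum, map_smul, b.coord_apply]
  have hcoord (i) : HasDerivAt (fun τ => b.coord i (A τ)) (b.coord i A') t :=
    (b.coord i).toContinuousLinearMap.hasFDerivAt.comp_hasDerivAt t hA
  convert HasDerivAt.fun_sum fun i _ => (hcoord i).smul (hμ (b i)) using 1
  · exact funext fun τ => expand (μ τ) (A τ)
  · rw [Finset.sum_add_distrib, ← expand, ← expand, add_comm]

attribute [local instance] Matrix.normedAddCommGroup Matrix.normedSpace

theorem stmt5_general {n : ℕ}
    (g ξ : ℝ → Matrix (Fin n) (Fin n) ℝ)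
    (hginv : ∀ t, IsUnit (g t))
    (hg : ∀ t, HasDerivAt g (ξ t * g t) t)
    (μ dμ f : ℝ → Matrix (Fin n) (Fin n) ℝ →ₗ[ℝ] ℝ)
    (hμ : ∀ (t : ℝ) (M : Matrix (Fin n) (Fin n) ℝ), HasDerivAt (fun τ => μ τ M) (dμ t M) t)
    (hEP : ∀ (t : ℝ) (M : Matrix (Fin n) (Fin n) ℝ),
      dμ t M = -μ t (ξ t * M - M * ξ t) + f t M) :
    ∀ (η : Matrix (Fin n) (Fin n) ℝ) (t : ℝ),
      HasDerivAt (fun τ => μ τ (g τ * η * (g τ)⁻¹)) (f t (g t * η * (g t)⁻¹)) t := by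
  intro η t
  have h := hasDerivAt_linearMap_apply (hμ t)
    (Matrix.hasDerivAt_conj_nonsing_inv η (hg t) (hginv t))
  rwa [hEP, add_neg_cancel_left] at h

/-- Kelvin–Noether with forcing: if `g' = ξ·g` with `g(t)` invertible,
`μ(t)` is a differentiable curve of linear functionals on matrices satisfying the
forced Euler–Poincaré equation `μ'(M) = −μ(ξM − Mξ) + f(M)`, then for every fixed
matrix `η` the Kelvin–Noether quantity `t ↦ μ(t)(g(t) η g(t)⁻¹)` is differentiable
with derivative `f(t)(g(t) η g(t)⁻¹)`. -/
theorem stmt5 {n : ℕ}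
    (g ξ : ℝ → Matrix (Fin n) (Fin n) ℝ)
    (hξcont : Continuous ξ)
    (hginv : ∀ t, IsUnit (g t))
    (hg : ∀ t, HasDerivAt g (ξ t * g t) t)
    (μ dμ f : ℝ → Matrix (Fin n) (Fin n) ℝ →ₗ[ℝ] ℝ)
    (hμ : ∀ (t : ℝ) (M : Matrix (Fin n) (Fin n) ℝ), HasDerivAt (fun τ => μ τ M) (dμ t M) t)
    (hEP : ∀ (t : ℝ) (M : Matrix (Fin n) (Fin n) ℝ),
      dμ t M = -μ t (ξ t * M - M * ξ t) + f t M) :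
    ∀ (η : Matrix (Fin n) (Fin n) ℝ) (t : ℝ),
      HasDerivAt (fun τ => μ τ (g τ * η * (g τ)⁻¹)) (f t (g t * η * (g t)⁻¹)) t :=
  stmt5_general g ξ hginv hg μ dμ f hμ hEP
end

section
/- Let z : ℝ × ℝ → ℝⁿ be a C² map with ∂_t z(t,s) = u(t, z(t,s)) and z(t, s+1) = z(t,s) for all (t,s) (a loop of trajectories of u). Then the circulation t ↦ ∫₀¹ Σᵢ αᵢ(t, z(t,s)) · ∂_s zᵢ(t,s) ds is constant in t. -/
/-!
Write `F(t,s) = α(t, z(t,s)) ⬝ ∂ₛz(t,s)`. Along the trajectories `∂ₜz = u`, so the transport law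
gives `∂ₜ[α(t,z)] = -(Dₓu)ᵀα - ∇ₓG`, while by symmetry of mixed partials
`∂ₜ∂ₛz = ∂ₛ∂ₜz = ∂ₛ[u(t,z)] = Dₓu ∂ₛz`. In `∂ₜF` the two terms `α ⬝ Dₓu ∂ₛz` cancel, leaving
`∂ₜF = -∂ₛ[G(t, z(t,s))]`. Differentiating under the integral sign, the derivative of the
circulation is the integral of an exact derivative around the closed loop `s ↦ z(t,s)`, hence zero.
-/

open scoped BigOperators
open Metric MeasureTheory Set

section Calculus

variable {E : Type*} [NormedAddCommGroup E] [NormedSpace ℝ E]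

theorem DifferentiableAt.hasDerivAt_slice_fst {f : ℝ × ℝ → E} {t s : ℝ}
    (hf : DifferentiableAt ℝ f (t, s)) :
    HasDerivAt (fun τ => f (τ, s)) (fderiv ℝ f (t, s) (1, 0)) t :=
  hf.hasFDerivAt.comp_hasDerivAt t ((hasDerivAt_id t).prodMk (hasDerivAt_const t s))

theorem DifferentiableAt.hasDerivAt_slice_snd {f : ℝ × ℝ → E} {t s : ℝ}
    (hf : DifferentiableAt ℝ f (t, s)) :
    HasDerivAt (fun σ => f (t, σ)) (fderiv ℝ f (t, s) (0, 1)) s :=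
  hf.hasFDerivAt.comp_hasDerivAt s ((hasDerivAt_const s t).prodMk (hasDerivAt_id s))

theorem ContDiff.hasDerivAt_fderiv_snd_of_hasDerivAt_fderiv_fst {z : ℝ × ℝ → E}
    (hz : ContDiff ℝ 2 z) {t s : ℝ} {w : E}
    (h : HasDerivAt (fun σ => fderiv ℝ z (t, σ) (1, 0)) w s) :
    HasDerivAt (fun τ => fderiv ℝ z (τ, s) (0, 1)) w t := by
  have hD : DifferentiableAt ℝ (fderiv ℝ z) (t, s) :=
    ((hz.fderiv_right (m := 1) le_rfl).differentiable one_ne_zero) _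
  have hτ := (ContinuousLinearMap.apply ℝ E ((0 : ℝ), (1 : ℝ))).hasFDerivAt.comp_hasDerivAt t
    hD.hasDerivAt_slice_fst
  have hσ := (ContinuousLinearMap.apply ℝ E ((1 : ℝ), (0 : ℝ))).hasFDerivAt.comp_hasDerivAt s
    hD.hasDerivAt_slice_snd
  have hsymm := (hz.contDiffAt (x := (t, s))).isSymmSndFDerivAt (by simp) ((1 : ℝ), (0 : ℝ)) (0, 1)
  simp only [Function.comp_def, ContinuousLinearMap.apply_apply] at hτ hσ
  rwa [hsymm, hσ.unique h] at hτ

theorem intervalIntegral.hasDerivAt_integral_of_continuous [CompleteSpace E] {F F' : ℝ × ℝ → E}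
    (hF : Continuous F) (hF' : Continuous F')
    (hderiv : ∀ t s, HasDerivAt (fun τ => F (τ, s)) (F' (t, s)) t) (a b t₀ : ℝ) :
    HasDerivAt (fun t => ∫ s in a..b, F (t, s)) (∫ s in a..b, F' (t₀, s)) t₀ := by
  obtain ⟨C, hC⟩ := ((isCompact_closedBall t₀ 1).prod isCompact_uIcc).exists_bound_of_continuousOn
    hF'.continuousOn
  exact (hasDerivAt_integral_of_dominated_loc_of_deriv_le (bound := fun _ => C)
    (closedBall_mem_nhds t₀ one_pos)
    (.of_forall fun t => (hF.comp (Continuous.prodMk_right t)).aestronglyMeasurable)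
    ((hF.comp (Continuous.prodMk_right t₀)).intervalIntegrable a b)
    (hF'.comp (Continuous.prodMk_right t₀)).aestronglyMeasurable
    (ae_of_all _ fun s hs t ht => hC (t, s) ⟨ht, uIoc_subset_uIcc hs⟩)
    intervalIntegrable_const (ae_of_all _ fun s _ t _ => hderiv t s)).2

theorem integral_fderiv_comp_eq_zero_of_closed {g : ℝ × E → ℝ} {z : ℝ × ℝ → E}
    (hg : ContDiff ℝ 1 g) (hz : ContDiff ℝ 1 z) {t : ℝ} (hclosed : z (t, 1) = z (t, 0)) :
    ∫ s in (0:ℝ)..1, fderiv ℝ g (t, z (t, s)) (0, fderiv ℝ z (t, s) (0, 1)) = 0 := by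
  have hDz := hz.continuous_fderiv one_ne_zero
  have hDg := hg.continuous_fderiv one_ne_zero
  rw [intervalIntegral.integral_eq_sub_of_hasDerivAt (f := fun s => g (t, z (t, s)))
    (fun s _ => (hg.differentiable one_ne_zero _).hasFDerivAt.comp_hasDerivAt s
      ((hasDerivAt_const s t).prodMk ((hz.differentiable one_ne_zero) _).hasDerivAt_slice_snd))
    (Continuous.intervalIntegrable (by fun_prop) _ _), hclosed, sub_self]

end Calculus

theorem HasDerivAt.dotProduct {𝕜 ι : Type*} [NontriviallyNormedField 𝕜] [Fintype ι]
    {a b : 𝕜 → ι → 𝕜} {a' b' : ι → 𝕜} {t : 𝕜} (ha : HasDerivAt a a' t)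
    (hb : HasDerivAt b b' t) :
    HasDerivAt (fun τ => a τ ⬝ᵥ b τ) (a' ⬝ᵥ b t + a t ⬝ᵥ b') t := by
  unfold _root_.dotProduct
  rw [← Finset.sum_add_distrib]
  exact HasDerivAt.fun_sum fun i _ => (hasDerivAt_pi.1 ha i).mul (hasDerivAt_pi.1 hb i)

theorem ContinuousLinearMap.map_zero_prod_eq_sum_single {E F : Type*} [AddCommGroup E]
    [Module ℝ E] [TopologicalSpace E] [AddCommGroup F] [Module ℝ F] [TopologicalSpace F] {n : ℕ}
    (L : E × (Fin n → ℝ) →L[ℝ] F) (v : Fin n → ℝ) :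
    L (0, v) = ∑ j, v j • L (0, Pi.single j 1) := by
  have hv : ((0 : E), v) = ∑ j, v j • ((0 : E), (Pi.single j 1 : Fin n → ℝ)) := by
    ext
    · simp [Prod.fst_sum]
    · simp [Prod.snd_sum, Finset.sum_apply, Pi.single_apply]
  rw [hv, map_sum]
  simp only [map_smul]

section Kelvin

variable {n : ℕ} {u α : ℝ × (Fin n → ℝ) → Fin n → ℝ} {G : ℝ × (Fin n → ℝ) → ℝ}

def TransportLaw (u α : ℝ × (Fin n → ℝ) → Fin n → ℝ) (G : ℝ × (Fin n → ℝ) → ℝ) : Prop :=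
  ∀ (t : ℝ) (z : Fin n → ℝ) (i : Fin n),
    fderiv ℝ (fun p => α p i) (t, z) (1, 0)
      + (∑ j : Fin n, u (t, z) j * fderiv ℝ (fun p => α p i) (t, z) (0, Pi.single j 1))
      + (∑ j : Fin n, α (t, z) j * fderiv ℝ (fun p => u p j) (t, z) (0, Pi.single i 1))
      + fderiv ℝ G (t, z) (0, Pi.single i 1) = 0

theorem TransportLaw.fderiv_apply_dotProduct (h : TransportLaw u α G) {t : ℝ} {x : Fin n → ℝ}
    (hα : DifferentiableAt ℝ α (t, x)) (hu : DifferentiableAt ℝ u (t, x)) (w : Fin n → ℝ) :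
    fderiv ℝ α (t, x) (1, u (t, x)) ⬝ᵥ w
      = -(α (t, x) ⬝ᵥ fderiv ℝ u (t, x) (0, w)) - fderiv ℝ G (t, x) (0, w) := by
  have hrow : ∀ i, fderiv ℝ α (t, x) (1, u (t, x)) i
      = -(∑ j, α (t, x) j * fderiv ℝ (fun p => u p j) (t, x) (0, Pi.single i 1))
        - fderiv ℝ G (t, x) (0, Pi.single i 1) := by
    intro i
    have hi := h t x i
    simp only [fderiv_apply hα i, ContinuousLinearMap.comp_apply,
      ContinuousLinearMap.proj_apply] at hi
    have hsplit : ((1 : ℝ), u (t, x)) = (1, 0) + (0, u (t, x)) := by simp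
    rw [hsplit, map_add, ContinuousLinearMap.map_zero_prod_eq_sum_single]
    simp only [Pi.add_apply, Finset.sum_apply, Pi.smul_apply, smul_eq_mul]
    linarith
  have hcol : ∀ j, fderiv ℝ u (t, x) (0, w) j
      = ∑ i, w i * fderiv ℝ (fun p => u p j) (t, x) (0, Pi.single i 1) := by
    intro j
    rw [fderiv_apply hu j, ContinuousLinearMap.map_zero_prod_eq_sum_single]
    simp
  rw [ContinuousLinearMap.map_zero_prod_eq_sum_single (fderiv ℝ G (t, x)) w, dotProduct_comm]
  simp only [dotProduct, hrow, hcol, smul_eq_mul, mul_sub, mul_neg, Finset.mul_sum,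
    Finset.sum_sub_distrib, Finset.sum_neg_distrib]
  rw [Finset.sum_comm]
  simp only [mul_left_comm]

theorem TransportLaw.hasDerivAt_circulation_density (h : TransportLaw u α G)
    (hα : Differentiable ℝ α) (hu : Differentiable ℝ u) {z : ℝ × ℝ → Fin n → ℝ}
    (hz : ContDiff ℝ 2 z) (hflow : ∀ t s : ℝ, deriv (fun τ => z (τ, s)) t = u (t, z (t, s)))
    (t s : ℝ) :
    HasDerivAt (fun τ => α (τ, z (τ, s)) ⬝ᵥ fderiv ℝ z (τ, s) (0, 1))
      (-fderiv ℝ G (t, z (t, s)) (0, fderiv ℝ z (t, s) (0, 1))) t := by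
  have hzd : Differentiable ℝ z := hz.differentiable two_ne_zero
  have hflow' : ∀ τ σ, fderiv ℝ z (τ, σ) (1, 0) = u (τ, z (τ, σ)) := fun τ σ => by
    rw [← hflow, (hzd _).hasDerivAt_slice_fst.deriv]
  have hpath : HasDerivAt (fun τ => (τ, z (τ, s))) ((1 : ℝ), u (t, z (t, s))) t := by
    rw [← hflow']
    exact (hasDerivAt_id t).prodMk (hzd _).hasDerivAt_slice_fst
  have hloop : HasDerivAt (fun σ => (t, z (t, σ))) ((0 : ℝ), fderiv ℝ z (t, s) (0, 1)) s :=
    (hasDerivAt_const s t).prodMk (hzd _).hasDerivAt_slice_snd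
  have hform := (hα _).hasFDerivAt.comp_hasDerivAt t hpath
  have htangent : HasDerivAt (fun τ => fderiv ℝ z (τ, s) (0, 1))
      (fderiv ℝ u (t, z (t, s)) (0, fderiv ℝ z (t, s) (0, 1))) t := by
    refine hz.hasDerivAt_fderiv_snd_of_hasDerivAt_fderiv_fst ?_
    simp only [hflow']
    exact (hu _).hasFDerivAt.comp_hasDerivAt s hloop
  refine (hform.dotProduct htangent).congr_deriv ?_
  rw [h.fderiv_apply_dotProduct (hα _) (hu _), Function.comp_apply]
  ring

end Kelvin

/-- Kelvin circulation theorem: if the one-form `α` is transported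
along the C¹ vector field `u` with potential forcing `G`, and `z(t,s)` is a C²
loop of trajectories of `u` (periodic in `s` with period 1), then the circulation
`t ↦ ∫₀¹ Σᵢ αᵢ(t, z(t,s)) ∂ₛzᵢ(t,s) ds` is constant in `t`. -/
theorem stmt7 {n : ℕ}
    (u α : ℝ × (Fin n → ℝ) → Fin n → ℝ)
    (G : ℝ × (Fin n → ℝ) → ℝ)
    (hu : ContDiff ℝ 1 u) (hα : ContDiff ℝ 1 α) (hG : ContDiff ℝ 1 G)
    (htransport : ∀ (t : ℝ) (z : Fin n → ℝ) (i : Fin n),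
      fderiv ℝ (fun p => α p i) (t, z) (1, 0)
        + (∑ j : Fin n, u (t, z) j * fderiv ℝ (fun p => α p i) (t, z) (0, Pi.single j 1))
        + (∑ j : Fin n, α (t, z) j * fderiv ℝ (fun p => u p j) (t, z) (0, Pi.single i 1))
        + fderiv ℝ G (t, z) (0, Pi.single i 1) = 0)
    (z : ℝ × ℝ → Fin n → ℝ)
    (hz : ContDiff ℝ 2 z)
    (hflow : ∀ t s : ℝ, deriv (fun τ => z (τ, s)) t = u (t, z (t, s)))
    (hper : ∀ t s : ℝ, z (t, s + 1) = z (t, s)) :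
    ∀ t t' : ℝ,
      (∫ s in (0:ℝ)..1, ∑ i : Fin n, α (t, z (t, s)) i * deriv (fun σ => z (t, σ)) s i)
        = ∫ s in (0:ℝ)..1, ∑ i : Fin n, α (t', z (t', s)) i * deriv (fun σ => z (t', σ)) s i := by
  have hzd : Differentiable ℝ z := hz.differentiable two_ne_zero
  have hαc := hα.continuous
  have hDz := hz.continuous_fderiv two_ne_zero
  have hDG := hG.continuous_fderiv one_ne_zero
  have hintegrand : ∀ t, (fun s => ∑ i, α (t, z (t, s)) i * deriv (fun σ => z (t, σ)) s i)
      = fun s => α (t, z (t, s)) ⬝ᵥ fderiv ℝ z (t, s) (0, 1) := fun t => funext fun s => by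
    rw [(hzd _).hasDerivAt_slice_snd.deriv]; rfl
  have hexact : ∀ t,
      ∫ s in (0:ℝ)..1, fderiv ℝ G (t, z (t, s)) (0, fderiv ℝ z (t, s) (0, 1)) = 0 := fun t =>
    integral_fderiv_comp_eq_zero_of_closed hG (hz.of_le one_le_two) (by simpa using hper t 0)
  have hcirc : ∀ t, HasDerivAt
      (fun t => ∫ s in (0:ℝ)..1, α (t, z (t, s)) ⬝ᵥ fderiv ℝ z (t, s) (0, 1)) 0 t := fun t => by
    simpa [intervalIntegral.integral_neg, hexact t] using
      intervalIntegral.hasDerivAt_integral_of_continuous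
      (F := fun p => α (p.1, z p) ⬝ᵥ fderiv ℝ z p (0, 1))
      (F' := fun p => -fderiv ℝ G (p.1, z p) (0, fderiv ℝ z p (0, 1))) (by fun_prop) (by fun_prop)
      (TransportLaw.hasDerivAt_circulation_density htransport (hα.differentiable one_ne_zero)
        (hu.differentiable one_ne_zero) hz hflow) 0 1 t
  intro t t'
  simp only [hintegrand]
  exact is_const_of_deriv_eq_zero (fun x => (hcirc x).differentiableAt) (fun x => (hcirc x).deriv)
    t t'
end

section
/- For all (t, z) ∈ ℝ × ℝⁿ, the determinant of the Jacobian matrix D_zφ(t, z) satisfies the Liouville formula ∂_t det(D_zφ(t, z)) = (div u)(t, φ(t, z)) · det(D_zφ(t, z)), where (div u)(t, y) = Σᵢ ∂_{yᵢ} uᵢ(t, y). -/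
/-!
Differentiating the flow equation `∂ₜφ = u(t, φ)` in `z`, and exchanging the order of the mixed
partial derivatives of `φ`, shows that the Jacobian `J(t) = D_zφ(t, z)` solves the variational
equation `J' = A J` with `A = D_y u(t, φ(t, z))`. By multilinearity of the determinant in the rows,
the derivative of `det J` is `∑ᵢ det (J with row i replaced by (A J)ᵢ) = (tr A) det J`,
and `tr A = div u`.
-/

open ContinuousLinearMap

namespace Matrix

variable {𝕜 ι : Type*} [NontriviallyNormedField 𝕜] [Fintype ι] [DecidableEq ι]

variable (𝕜 ι) in
noncomputable def detRowContinuousMultilinear :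
    ContinuousMultilinearMap 𝕜 (fun _ : ι => ι → 𝕜) 𝕜 :=
  { (detRowAlternating : (ι → 𝕜) [⋀^ι]→ₗ[𝕜] 𝕜).toMultilinearMap with
    cont := continuous_id.matrix_det }

theorem sum_det_updateRow_mul (A M : Matrix ι ι 𝕜) :
    ∑ i, (M.updateRow i ((A * M) i)).det = A.trace * M.det := by
  have hrow : ∀ i, (A * M) i = ∑ k, A i k • M k := fun i => by
    ext j
    simp [mul_apply, Finset.sum_apply]
  simp [hrow, det_updateRow_sum, trace, Finset.sum_mul]

end Matrix

section MatrixDerivative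

variable {𝕜 ι : Type*} [NontriviallyNormedField 𝕜] [Fintype ι] [DecidableEq ι]

theorem HasDerivAt.matrix_det {M : 𝕜 → Matrix ι ι 𝕜} {M' : Matrix ι ι 𝕜} {t : 𝕜}
    (h : HasDerivAt M M' t) :
    HasDerivAt (fun τ => (M τ).det) (∑ i, ((M t).updateRow i (M' i)).det) t := by
  -- `Matrix.of.symm` exposes the normed structure of `ι → ι → 𝕜`, which `Matrix` does not carry.
  have h' : HasDerivAt (fun τ => Matrix.of.symm (M τ)) (Matrix.of.symm M') t := h
  have hD := ((Matrix.detRowContinuousMultilinear 𝕜 ι).hasFDerivAt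
    (Matrix.of.symm (M t))).comp_hasDerivAt t h'
  rw [ContinuousMultilinearMap.linearDeriv_apply] at hD
  exact hD

theorem HasDerivAt.matrix_det_of_mul_left {M : 𝕜 → Matrix ι ι 𝕜} {A : Matrix ι ι 𝕜} {t : 𝕜}
    (h : HasDerivAt M (A * M t) t) :
    HasDerivAt (fun τ => (M τ).det) (A.trace * (M t).det) t :=
  Matrix.sum_det_updateRow_mul A (M t) ▸ h.matrix_det

theorem LinearMap.toMatrix'_fderiv {m : Type*} {f : (ι → 𝕜) → m → 𝕜} {z : ι → 𝕜}
    (hf : DifferentiableAt 𝕜 f z) :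
    LinearMap.toMatrix' (fderiv 𝕜 f z : (ι → 𝕜) →ₗ[𝕜] m → 𝕜) =
      Matrix.of fun i j => fderiv 𝕜 (fun y => f y i) z (Pi.single j 1) := by
  ext i j
  simp [LinearMap.toMatrix'_apply, fderiv_apply hf]

theorem HasDerivAt.toMatrix' {m : Type*} [Fintype m] {L : 𝕜 → (ι → 𝕜) →L[𝕜] m → 𝕜}
    {L' : (ι → 𝕜) →L[𝕜] m → 𝕜} {t : 𝕜} (h : HasDerivAt L L' t) :
    HasDerivAt (fun τ => LinearMap.toMatrix' (L τ : (ι → 𝕜) →ₗ[𝕜] m → 𝕜))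
      (LinearMap.toMatrix' (L' : (ι → 𝕜) →ₗ[𝕜] m → 𝕜)) t := by
  have hentry : ∀ i j, HasDerivAt (fun τ => L τ (Pi.single j 1) i) (L' (Pi.single j 1) i) t :=
    fun i j => hasDerivAt_pi.1 ((apply 𝕜 _ (Pi.single j 1)).hasFDerivAt.comp_hasDerivAt t h) i
  have h' : HasDerivAt (fun τ => Matrix.of.symm (LinearMap.toMatrix' (L τ : (ι → 𝕜) →ₗ[𝕜] m → 𝕜)))
      (Matrix.of.symm (LinearMap.toMatrix' (L' : (ι → 𝕜) →ₗ[𝕜] m → 𝕜))) t :=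
    hasDerivAt_pi.2 fun i => hasDerivAt_pi.2 fun j => by
      simpa [LinearMap.toMatrix'_apply] using hentry i j
  exact h'

end MatrixDerivative

section PartialDerivatives

variable {E F G : Type*} [NormedAddCommGroup E] [NormedSpace ℝ E] [NormedAddCommGroup F]
  [NormedSpace ℝ F] [NormedAddCommGroup G] [NormedSpace ℝ G]

theorem fderiv_comp_prodMk_right {f : E × F → G} {a : E} {b : F}
    (hf : DifferentiableAt ℝ f (a, b)) :
    fderiv ℝ (fun y => f (a, y)) b = (fderiv ℝ f (a, b)).comp (inr ℝ E F) :=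
  (hf.hasFDerivAt.comp b (hasFDerivAt_prodMk_right a b)).fderiv

theorem HasFDerivAt.hasDerivAt_comp_prodMk_left {f : ℝ × F → G} {f' : ℝ × F →L[ℝ] G} {s : ℝ}
    {y : F} (hf : HasFDerivAt f f' (s, y)) :
    HasDerivAt (fun τ => f (τ, y)) (f' (1, 0)) s :=
  hf.comp_hasDerivAt s ((hasDerivAt_id s).prodMk (hasDerivAt_const s y))

end PartialDerivatives

section Flow

variable {E : Type*} [NormedAddCommGroup E] [NormedSpace ℝ E]

theorem hasDerivAt_fderiv_flow {u φ : ℝ × E → E} {t : ℝ} {z : E}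
    (hu : DifferentiableAt ℝ u (t, φ (t, z))) (hφ : ContDiff ℝ 2 φ)
    (hflow : ∀ s y, HasDerivAt (fun τ => φ (τ, y)) (u (s, φ (s, y))) s) :
    HasDerivAt (fun τ => fderiv ℝ (fun y => φ (τ, y)) z)
      ((fderiv ℝ (fun y => u (t, y)) (φ (t, z))).comp (fderiv ℝ (fun y => φ (t, y)) z)) t := by
  have hφd : Differentiable ℝ φ := hφ.differentiable two_ne_zero
  have hΦd : Differentiable ℝ (fderiv ℝ φ) :=
    (hφ.fderiv_right (m := 1) le_rfl).differentiable one_ne_zero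
  have htime : (fun q => fderiv ℝ φ q (1, 0)) = fun q => u (q.1, φ q) := by
    funext q
    exact (hφd q).hasFDerivAt.hasDerivAt_comp_prodMk_left.unique (hflow q.1 q.2)
  have hmixed : ∀ v, fderiv ℝ (fderiv ℝ φ) (t, z) (1, 0) (0, v) =
      fderiv ℝ u (t, φ (t, z)) (0, fderiv ℝ φ (t, z) (0, v)) := by
    intro v
    have hsymm : fderiv ℝ (fderiv ℝ φ) (t, z) (1, 0) (0, v) =
        fderiv ℝ (fderiv ℝ φ) (t, z) (0, v) (1, 0) :=
      hφ.contDiffAt.isSymmSndFDerivAt (by simp [minSmoothness_of_isRCLikeNormedField]) _ _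
    have htime_deriv : HasFDerivAt (fun q => fderiv ℝ φ q (1, 0))
        ((apply ℝ E ((1, 0) : ℝ × E)).comp (fderiv ℝ (fderiv ℝ φ) (t, z))) (t, z) :=
      (apply ℝ E ((1, 0) : ℝ × E)).hasFDerivAt.comp (t, z) (hΦd (t, z)).hasFDerivAt
    have hchain : HasFDerivAt (fun q : ℝ × E => u (q.1, φ q))
        ((fderiv ℝ u (t, φ (t, z))).comp ((fst ℝ ℝ E).prod (fderiv ℝ φ (t, z)))) (t, z) :=
      hu.hasFDerivAt.comp (t, z) (hasFDerivAt_fst.prodMk (hφd (t, z)).hasFDerivAt)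
    rw [htime] at htime_deriv
    simpa [hsymm] using congrArg (· (0, v)) (htime_deriv.unique hchain)
  have hslice : (fun τ => fderiv ℝ (fun y => φ (τ, y)) z) =
      fun τ => (compL ℝ E (ℝ × E) E).flip (inr ℝ ℝ E) (fderiv ℝ φ (τ, z)) := by
    funext τ
    exact fderiv_comp_prodMk_right (hφd (τ, z))
  rw [hslice]
  refine (((compL ℝ E (ℝ × E) E).flip (inr ℝ ℝ E)).hasFDerivAt.comp_hasDerivAt t
    (hΦd (t, z)).hasFDerivAt.hasDerivAt_comp_prodMk_left).congr_deriv ?_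
  ext v
  simpa [fderiv_comp_prodMk_right hu, fderiv_comp_prodMk_right (hφd (t, z))] using hmixed v

end Flow

theorem stmt11_general {n : ℕ}
    (u : ℝ × (Fin n → ℝ) → Fin n → ℝ) (hu : ContDiff ℝ 1 u)
    (φ : ℝ × (Fin n → ℝ) → Fin n → ℝ) (hφ : ContDiff ℝ 2 φ)
    (hflow : ∀ t z, deriv (fun τ => φ (τ, z)) t = u (t, φ (t, z))) :
    ∀ (t : ℝ) (z : Fin n → ℝ),
      HasDerivAt
        (fun τ => (Matrix.of fun i j => fderiv ℝ (fun y => φ (τ, y) i) z (Pi.single j 1)).det)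
        ((∑ i : Fin n, fderiv ℝ (fun y => u (t, y) i) (φ (t, z)) (Pi.single i 1)) *
          (Matrix.of fun i j => fderiv ℝ (fun y => φ (t, y) i) z (Pi.single j 1)).det)
        t := by
  intro t z
  have hφd : Differentiable ℝ φ := hφ.differentiable two_ne_zero
  have hud : Differentiable ℝ u := hu.differentiable one_ne_zero
  have hflow' : ∀ s y, HasDerivAt (fun τ => φ (τ, y)) (u (s, φ (s, y))) s := fun s y =>
    hflow s y ▸ (hφd (s, y)).hasFDerivAt.hasDerivAt_comp_prodMk_left.differentiableAt.hasDerivAt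
  have hjac : ∀ τ, (Matrix.of fun i j => fderiv ℝ (fun y => φ (τ, y) i) z (Pi.single j 1)) =
      LinearMap.toMatrix' (fderiv ℝ (fun y => φ (τ, y)) z : (Fin n → ℝ) →ₗ[ℝ] Fin n → ℝ) :=
    fun τ => (LinearMap.toMatrix'_fderiv (by fun_prop)).symm
  have hdiv : ∑ i, fderiv ℝ (fun y => u (t, y) i) (φ (t, z)) (Pi.single i 1) =
      (LinearMap.toMatrix'
        (fderiv ℝ (fun y => u (t, y)) (φ (t, z)) : (Fin n → ℝ) →ₗ[ℝ] Fin n → ℝ)).trace := by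
    rw [LinearMap.toMatrix'_fderiv (by fun_prop)]
    rfl
  simp only [hjac, hdiv]
  apply HasDerivAt.matrix_det_of_mul_left
  rw [← LinearMap.toMatrix'_comp]
  exact (hasDerivAt_fderiv_flow (hud _) hφ hflow').toMatrix'

/-- Liouville's formula.  If `φ` is the flow of the C¹ time-dependent
vector field `u`, then `∂ₜ det(D_zφ(t,z)) = (div u)(t, φ(t,z)) · det(D_zφ(t,z))`. -/
theorem stmt11 {n : ℕ}
    (u : ℝ × (Fin n → ℝ) → Fin n → ℝ) (hu : ContDiff ℝ 1 u)
    (φ : ℝ × (Fin n → ℝ) → Fin n → ℝ) (hφ : ContDiff ℝ 2 φ)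
    (hflow : ∀ t z, deriv (fun τ => φ (τ, z)) t = u (t, φ (t, z)))
    (hinit : ∀ z, φ (0, z) = z) :
    ∀ (t : ℝ) (z : Fin n → ℝ),
      HasDerivAt
        (fun τ => (Matrix.of fun i j => fderiv ℝ (fun y => φ (τ, y) i) z (Pi.single j 1)).det)
        ((∑ i : Fin n, fderiv ℝ (fun y => u (t, y) i) (φ (t, z)) (Pi.single i 1)) *
          (Matrix.of fun i j => fderiv ℝ (fun y => φ (t, y) i) z (Pi.single j 1)).det)
        t :=
  stmt11_general u hu φ hφ hflow
end

section
/- Assume the continuity equation ∂_t F + Σ_{j=1}^{6} ∂_{z_j}(F U_j) = 0 and, for each spatial index i = 1, 2, 3, the Lie–Poisson momentum equation ∂_t p_i = −Σ_{j=1}^{6} ∂_{z_j}(p_i U_j) − Σ_{j=1}^{3} p_j ∂_{x_i} U_j + F ∂_{x_i}(½ m|v|² + q v·A(t,x) − q Φ(t,x)). Then at every point (t, x, v) with F(t, x, v) ≠ 0 the Lorentz force law holds: m a(t, x, v) = q (E(t, x) + v × B(t, x)), where E = −∇_x Φ − ∂_t A and B = ∇_x × A. -/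
/-!
Write `p = F π` with `π = m v + q A(t, x)`. By the Leibniz rule the momentum equation splits into
`π` times the continuity equation plus `F (∂ₜπ + v · ∇ₓπ + a · ∇ᵥπ)`, and `∇ᵥπᵢ = m eᵢ`. Where
`F ≠ 0` this leaves `m aᵢ + q (∂ₜAᵢ + (v · ∇)Aᵢ) = q (∂ᵢ(v · A) − ∂ᵢΦ)`, which is the Lorentz force
law because `v × (∇ × A) = ∇(v · A) − (v · ∇)A`.
-/

open scoped BigOperators

/-- partial derivative of a scalar field on `ℝ³` in the `i`-th coordinate direction -/
noncomputable def pd3 (f : (Fin 3 → ℝ) → ℝ) (x : Fin 3 → ℝ) (i : Fin 3) : ℝ :=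
  fderiv ℝ f x (Pi.single i 1)

/-- curl of a vector field on `ℝ³` -/
noncomputable def curl3 (f : (Fin 3 → ℝ) → Fin 3 → ℝ) (x : Fin 3 → ℝ) : Fin 3 → ℝ :=
  ![pd3 (fun y => f y 2) x 1 - pd3 (fun y => f y 1) x 2,
    pd3 (fun y => f y 0) x 2 - pd3 (fun y => f y 2) x 0,
    pd3 (fun y => f y 1) x 0 - pd3 (fun y => f y 0) x 1]

theorem fderiv_fun_mul_apply {E : Type*} [NormedAddCommGroup E] [NormedSpace ℝ E]
    {f g : E → ℝ} {x : E} (hf : DifferentiableAt ℝ f x) (hg : DifferentiableAt ℝ g x) (w : E) :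
    fderiv ℝ (fun y => f y * g y) x w = fderiv ℝ f x w * g x + f x * fderiv ℝ g x w := by
  rw [fderiv_fun_mul hf hg]
  simp only [add_apply, smul_apply, smul_eq_mul]
  ring

theorem sum_fderiv_mul_mul_apply_single {n : ℕ} {ρ g : (Fin n → ℝ) → ℝ}
    {W : (Fin n → ℝ) → Fin n → ℝ} {z : Fin n → ℝ} (hρ : DifferentiableAt ℝ ρ z)
    (hg : DifferentiableAt ℝ g z) (hW : ∀ j, DifferentiableAt ℝ (fun y => W y j) z) :
    ∑ j, fderiv ℝ (fun y => ρ y * g y * W y j) z (Pi.single j 1)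
      = g z * ∑ j, fderiv ℝ (fun y => ρ y * W y j) z (Pi.single j 1)
        + ρ z * ∑ j, W z j * fderiv ℝ g z (Pi.single j 1) := by
  rw [Finset.mul_sum, Finset.mul_sum, ← Finset.sum_add_distrib]
  refine Finset.sum_congr rfl fun j _ => ?_
  have hρW : DifferentiableAt ℝ (fun y => ρ y * W y j) z := hρ.mul (hW j)
  have hcomm : (fun y => ρ y * g y * W y j) = fun y => g y * (ρ y * W y j) := by
    funext y; ring
  rw [hcomm, fderiv_fun_mul_apply hg hρW]
  ring

theorem sum_mul_fderiv_const_mul_apply_add {n : ℕ} (b : Fin n → ℝ) (c r : ℝ) (i : Fin n)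
    (v : Fin n → ℝ) :
    ∑ j, b j * fderiv ℝ (fun w : Fin n → ℝ => c * w i + r) v (Pi.single j 1) = c * b i := by
  have hderiv : HasFDerivAt (fun w : Fin n → ℝ => c * w i + r)
      (c • ContinuousLinearMap.proj (R := ℝ) (φ := fun _ : Fin n => ℝ) i) v :=
    ((ContinuousLinearMap.proj (R := ℝ) (φ := fun _ : Fin n => ℝ) i).hasFDerivAt.const_mul
      c).add_const r
  simp [hderiv.fderiv, Pi.single_apply, mul_comm]

/-- The charged-particle Lagrangian `½ m|v|² + q v · A − q Φ` as a function of position, with the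
kinetic term absorbed into `c`. -/
theorem fderiv_lagrangian_apply {E : Type*} [NormedAddCommGroup E] [NormedSpace ℝ E] {n : ℕ}
    {A : E → Fin n → ℝ} {Φ : E → ℝ} {x : E} (hA : ∀ k, DifferentiableAt ℝ (fun y => A y k) x)
    (hΦ : DifferentiableAt ℝ Φ x) (c q : ℝ) (v : Fin n → ℝ) (w : E) :
    fderiv ℝ (fun y => c + q * (∑ k, v k * A y k) - q * Φ y) x w
      = q * ∑ k, v k * fderiv ℝ (fun y => A y k) x w - q * fderiv ℝ Φ x w := by
  have hsum : HasFDerivAt (fun y => ∑ k, v k * A y k)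
      (∑ k, v k • fderiv ℝ (fun y => A y k) x) x :=
    HasFDerivAt.fun_sum fun k _ => ((hA k).hasFDerivAt.const_mul (v k))
  have hL := ((hsum.const_mul q).const_add c).fun_sub (hΦ.hasFDerivAt.const_mul q)
  rw [hL.fderiv]
  simp [Finset.mul_sum]

theorem cross_curl3_apply (f : (Fin 3 → ℝ) → Fin 3 → ℝ) (x v : Fin 3 → ℝ) (i : Fin 3) :
    crossProduct v (curl3 f x) i
      = ∑ k, v k * pd3 (fun y => f y k) x i - ∑ k, v k * pd3 (fun y => f y i) x k := by
  fin_cases i <;>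
  simp [cross_apply, curl3, Fin.sum_univ_three] <;> ring

theorem stmt18_general (m q : ℝ)
    (F : ℝ × (Fin 3 → ℝ) × (Fin 3 → ℝ) → ℝ)
    (a : ℝ × (Fin 3 → ℝ) × (Fin 3 → ℝ) → Fin 3 → ℝ)
    (Φ : ℝ × (Fin 3 → ℝ) → ℝ) (A : ℝ × (Fin 3 → ℝ) → Fin 3 → ℝ)
    (hF : ContDiff ℝ 1 F) (ha : ContDiff ℝ 1 a)
    (hΦ : ContDiff ℝ 1 Φ) (hA : ContDiff ℝ 1 A)
    (U : ℝ × (Fin 3 → ℝ) × (Fin 3 → ℝ) → (Fin 3 → ℝ) × (Fin 3 → ℝ))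
    (hU : ∀ (t : ℝ) (x v : Fin 3 → ℝ), U (t, x, v) = (v, a (t, x, v)))
    (p : ℝ × (Fin 3 → ℝ) × (Fin 3 → ℝ) → Fin 3 → ℝ)
    (hp : ∀ (t : ℝ) (x v : Fin 3 → ℝ),
      p (t, x, v) = F (t, x, v) • (m • v + q • A (t, x)))
    -- continuity equation  ∂ₜF + Σⱼ ∂_{zⱼ}(F Uⱼ) = 0
    (hcont : ∀ (t : ℝ) (x v : Fin 3 → ℝ),
      deriv (fun τ => F (τ, x, v)) t
        + (∑ j : Fin 3,
            fderiv ℝ (fun y => F (t, y, v) * (U (t, y, v)).1 j) x (Pi.single j 1))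
        + (∑ j : Fin 3,
            fderiv ℝ (fun w => F (t, x, w) * (U (t, x, w)).2 j) v (Pi.single j 1))
        = 0)
    -- Lie–Poisson momentum equation for the spatial momentum components
    (hmom : ∀ (t : ℝ) (x v : Fin 3 → ℝ) (i : Fin 3),
      deriv (fun τ => p (τ, x, v) i) t
        = -((∑ j : Fin 3,
              fderiv ℝ (fun y => p (t, y, v) i * (U (t, y, v)).1 j) x (Pi.single j 1))
            + ∑ j : Fin 3,
              fderiv ℝ (fun w => p (t, x, w) i * (U (t, x, w)).2 j) v (Pi.single j 1))
          - (∑ j : Fin 3,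
              p (t, x, v) j * fderiv ℝ (fun y => (U (t, y, v)).1 j) x (Pi.single i 1))
          + F (t, x, v) *
              fderiv ℝ
                (fun y => (1/2) * m * (∑ k : Fin 3, v k ^ 2)
                  + q * (∑ k : Fin 3, v k * A (t, y) k) - q * Φ (t, y))
                x (Pi.single i 1)) :
    ∀ (t : ℝ) (x v : Fin 3 → ℝ), F (t, x, v) ≠ 0 →
      m • a (t, x, v)
        = q • ((fun i => -pd3 (fun y => Φ (t, y)) x i - deriv (fun τ => A (τ, x) i) t)
            + crossProduct v (curl3 (fun y => A (t, y)) x)) := by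
  intro t x v hF0
  have hFd := hF.differentiable one_ne_zero
  have had := ha.differentiable one_ne_zero
  have hAd := hA.differentiable one_ne_zero
  have hΦd := hΦ.differentiable one_ne_zero
  simp only [hU, hp, Pi.smul_apply, Pi.add_apply, smul_eq_mul] at hcont hmom
  funext i
  have hAx : DifferentiableAt ℝ (fun y => A (t, y) i) x := by fun_prop
  have hAt : DifferentiableAt ℝ (fun τ => A (τ, x) i) t := by fun_prop
  have hmom := hmom t x v i
  rw [deriv_fun_mul (by fun_prop) (by fun_prop),
    sum_fderiv_mul_mul_apply_single (by fun_prop) (by fun_prop) (by fun_prop),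
    sum_fderiv_mul_mul_apply_single (by fun_prop) (by fun_prop) (by fun_prop),
    sum_mul_fderiv_const_mul_apply_add,
    fderiv_lagrangian_apply (by fun_prop) (by fun_prop)] at hmom
  simp only [fderiv_const_add, fderiv_const_mul hAx, deriv_const_add, deriv_const_mul _ hAt,
    fderiv_fun_const, Pi.zero_apply, zero_apply, mul_zero, Finset.sum_const_zero, smul_apply,
    smul_eq_mul, mul_left_comm _ q, ← Finset.mul_sum] at hmom
  simp only [Pi.smul_apply, smul_eq_mul, Pi.add_apply, cross_curl3_apply, pd3]
  refine mul_left_cancel₀ hF0 ?_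
  linear_combination hmom - (m * v i + q * A (t, x) i) * hcont t x v

/-- from the phase-space continuity equation and the Lie–Poisson
momentum equation for the spatial momentum density `p = F(mv + qA)`, the Lorentz
force law `m a = q(E + v × B)` holds wherever `F ≠ 0`, with `E = −∇ₓΦ − ∂ₜA` and
`B = ∇ₓ × A`. -/
theorem stmt18 (m q : ℝ) (hm : m ≠ 0)
    (F : ℝ × (Fin 3 → ℝ) × (Fin 3 → ℝ) → ℝ)
    (a : ℝ × (Fin 3 → ℝ) × (Fin 3 → ℝ) → Fin 3 → ℝ)
    (Φ : ℝ × (Fin 3 → ℝ) → ℝ) (A : ℝ × (Fin 3 → ℝ) → Fin 3 → ℝ)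
    (hF : ContDiff ℝ 1 F) (ha : ContDiff ℝ 1 a)
    (hΦ : ContDiff ℝ 1 Φ) (hA : ContDiff ℝ 1 A)
    (U : ℝ × (Fin 3 → ℝ) × (Fin 3 → ℝ) → (Fin 3 → ℝ) × (Fin 3 → ℝ))
    (hU : ∀ (t : ℝ) (x v : Fin 3 → ℝ), U (t, x, v) = (v, a (t, x, v)))
    (p : ℝ × (Fin 3 → ℝ) × (Fin 3 → ℝ) → Fin 3 → ℝ)
    (hp : ∀ (t : ℝ) (x v : Fin 3 → ℝ),
      p (t, x, v) = F (t, x, v) • (m • v + q • A (t, x)))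
    -- continuity equation  ∂ₜF + Σⱼ ∂_{zⱼ}(F Uⱼ) = 0
    (hcont : ∀ (t : ℝ) (x v : Fin 3 → ℝ),
      deriv (fun τ => F (τ, x, v)) t
        + (∑ j : Fin 3,
            fderiv ℝ (fun y => F (t, y, v) * (U (t, y, v)).1 j) x (Pi.single j 1))
        + (∑ j : Fin 3,
            fderiv ℝ (fun w => F (t, x, w) * (U (t, x, w)).2 j) v (Pi.single j 1))
        = 0)
    -- Lie–Poisson momentum equation for the spatial momentum components
    (hmom : ∀ (t : ℝ) (x v : Fin 3 → ℝ) (i : Fin 3),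
      deriv (fun τ => p (τ, x, v) i) t
        = -((∑ j : Fin 3,
              fderiv ℝ (fun y => p (t, y, v) i * (U (t, y, v)).1 j) x (Pi.single j 1))
            + ∑ j : Fin 3,
              fderiv ℝ (fun w => p (t, x, w) i * (U (t, x, w)).2 j) v (Pi.single j 1))
          - (∑ j : Fin 3,
              p (t, x, v) j * fderiv ℝ (fun y => (U (t, y, v)).1 j) x (Pi.single i 1))
          + F (t, x, v) *
              fderiv ℝ
                (fun y => (1/2) * m * (∑ k : Fin 3, v k ^ 2)
                  + q * (∑ k : Fin 3, v k * A (t, y) k) - q * Φ (t, y))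
                x (Pi.single i 1)) :
    ∀ (t : ℝ) (x v : Fin 3 → ℝ), F (t, x, v) ≠ 0 →
      m • a (t, x, v)
        = q • ((fun i => -pd3 (fun y => Φ (t, y)) x i - deriv (fun τ => A (τ, x) i) t)
            + crossProduct v (curl3 (fun y => A (t, y)) x)) :=
  stmt18_general m q F a Φ A hF ha hΦ hA U hU p hp hcont hmom
end
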